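/- (Property 1, monotonicity) For every K with 1 ≤ K < N, E[μ̂^B_{a_K*}] ≥ E[μ̂^B_{a_{K+1}*}]; i.e., as the number of candidates K decreases, the expected value of the action candidate based double estimator increases monotonically. -/
import Mathlib


open MeasureTheory ProbabilityTheory Finset

noncomputable section

/-- The (random) set `M_K` of indices whose `B`-value is among the `K` largest values
among `B 1 ω, …, B N ω`: an index belongs to it iff fewer than `K` indices have a
strictly larger `B`-value. -/
def topK {Ω : Type*} {N : ℕ} (B : Fin N → Ω → ℝ) (K : ℕ) (ω : Ω) : Finset (Fin N) :=
  Finset.univ.filter fun i => (Finset.univ.filter fun j => B i ω < B j ω).card < K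

/-- An element of the finite set `s` at which `f` is maximal over `s`. -/
def argmaxOn {α : Type*} [Nonempty α] (f : α → ℝ) (s : Finset α) : α :=
  if h : s.Nonempty then (s.exists_max_image f h).choose else Classical.arbitrary α

/-- `a_K*`: the index of `M_K` at which `i ↦ A i ω` is maximal over `M_K`. -/
def aK {Ω : Type*} {N : ℕ} [NeZero N] (A B : Fin N → Ω → ℝ) (K : ℕ) (ω : Ω) : Fin N :=
  argmaxOn (fun i => A i ω) (topK B K ω)

/-- `a*`: the index at which `i ↦ A i ω` is maximal over all indices. -/
def aStar {Ω : Type*} {N : ℕ} [NeZero N] (A : Fin N → Ω → ℝ) (ω : Ω) : Fin N :=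
  argmaxOn (fun i => A i ω) Finset.univ

/-- The pointwise maximum `max_{1 ≤ i ≤ N} C i ω` (e.g. the single estimator `μ̂*_SE`). -/
def maxOf {Ω : Type*} {N : ℕ} [NeZero N] (C : Fin N → Ω → ℝ) (ω : Ω) : ℝ :=
  Finset.univ.sup' Finset.univ_nonempty fun i => C i ω

/-- `a_(j)`: the index carrying the `j`-th largest value among `B 1 ω, …, B N ω`
(exactly `j - 1` indices have a strictly larger value). -/
def rankIdx {Ω : Type*} {N : ℕ} [NeZero N] (B : Fin N → Ω → ℝ) (j : ℕ) (ω : Ω) : Fin N :=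
  if h : ∃ i, (Finset.univ.filter fun k => B i ω < B k ω).card = j - 1 then h.choose
  else Classical.arbitrary (Fin N)

end

noncomputable section AuxProof

/-- number of indices with strictly larger `B`-value -/
def cardF {Ω : Type*} {N : ℕ} (B : Fin N → Ω → ℝ) (i : Fin N) (ω : Ω) : ℕ :=
  (Finset.univ.filter fun j => B i ω < B j ω).card

lemma mem_topK_iff {Ω : Type*} {N : ℕ} (B : Fin N → Ω → ℝ) (K : ℕ) (ω : Ω) (i : Fin N) :
    i ∈ topK B K ω ↔ cardF B i ω < K := by
  simp [topK, cardF]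

lemma measurable_cardF {Ω : Type*} [MeasurableSpace Ω] {N : ℕ} {B : Fin N → Ω → ℝ}
    (hB : ∀ i, Measurable (B i)) (i : Fin N) :
    Measurable (fun ω => cardF B i ω) := by
  have : (fun ω => cardF B i ω)
      = fun ω => ∑ j : Fin N, if B i ω < B j ω then 1 else 0 := by
    funext ω; rw [cardF, Finset.card_filter]
  rw [this]
  exact Finset.measurable_sum _ fun j _ =>
    Measurable.ite (measurableSet_lt (hB i) (hB j)) measurable_const measurable_const

lemma argmaxOn_spec {α : Type*} [Nonempty α] (f : α → ℝ) {s : Finset α} (h : s.Nonempty) :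
    argmaxOn f s ∈ s ∧ ∀ j ∈ s, f j ≤ f (argmaxOn f s) := by
  rw [argmaxOn, dif_pos h]
  exact (s.exists_max_image f h).choose_spec

lemma topK_nonempty {Ω : Type*} {N : ℕ} [NeZero N] (B : Fin N → Ω → ℝ) {K : ℕ}
    (hK : 1 ≤ K) (ω : Ω) : (topK B K ω).Nonempty := by
  obtain ⟨i0, -, hmax⟩ :=
    (Finset.univ (α := Fin N)).exists_max_image (fun i => B i ω) Finset.univ_nonempty
  refine ⟨i0, (mem_topK_iff B K ω i0).mpr ?_⟩
  have h0 : cardF B i0 ω = 0 := by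
    rw [cardF, Finset.card_eq_zero, Finset.filter_eq_empty_iff]
    intro j _
    exact not_lt.mpr (hmax j (Finset.mem_univ j))
  omega

lemma aK_spec {Ω : Type*} {N : ℕ} [NeZero N] (A B : Fin N → Ω → ℝ) {K : ℕ}
    (hK : 1 ≤ K) (ω : Ω) :
    aK A B K ω ∈ topK B K ω ∧ ∀ j ∈ topK B K ω, A j ω ≤ A (aK A B K ω) ω :=
  argmaxOn_spec (fun i => A i ω) (topK_nonempty B hK ω)

/-- Pointwise key inequality under injectivity of the `A`-values. -/
lemma key_ineq {Ω : Type*} {N : ℕ} [NeZero N] (A B : Fin N → Ω → ℝ) {K : ℕ}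
    (hK : 1 ≤ K) (ω : Ω) (hA : Function.Injective fun i => A i ω) :
    B (aK A B (K + 1) ω) ω ≤ B (aK A B K ω) ω := by
  have h' := aK_spec A B (by omega : 1 ≤ K + 1) ω
  have h := aK_spec A B hK ω
  set a' := aK A B (K + 1) ω with ha'def
  set a := aK A B K ω with hadef
  have haK : a ∈ topK B (K + 1) ω := by
    rw [mem_topK_iff]
    have := (mem_topK_iff B K ω a).mp h.1
    omega
  by_cases hmem : a' ∈ topK B K ω
  · have h1 : A a' ω ≤ A a ω := h.2 a' hmem
    have h2 : A a ω ≤ A a' ω := h'.2 a haK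
    have : a = a' := hA (le_antisymm h2 h1)
    rw [this]
  · -- a' is not among the top K, so cardF B a' ω ≥ K, while cardF B a ω < K
    by_contra hlt
    push_neg at hlt
    have hka' : K ≤ cardF B a' ω := by
      have := (mem_topK_iff B K ω a').not.mp hmem
      omega
    have hka : cardF B a ω < K := (mem_topK_iff B K ω a).mp h.1
    have hsub : insert a' (Finset.univ.filter fun j => B a' ω < B j ω)
        ⊆ (Finset.univ.filter fun j => B a ω < B j ω) := by
      intro j hj
      rcases Finset.mem_insert.mp hj with rfl | hj
      · exact Finset.mem_filter.mpr ⟨Finset.mem_univ _, hlt⟩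
      · exact Finset.mem_filter.mpr
          ⟨Finset.mem_univ _, hlt.trans (Finset.mem_filter.mp hj).2⟩
    have hnotmem : a' ∉ (Finset.univ.filter fun j => B a' ω < B j ω) := by
      simp
    have hcard := Finset.card_le_card hsub
    rw [Finset.card_insert_of_notMem hnotmem] at hcard
    have : cardF B a' ω + 1 ≤ cardF B a ω := hcard
    omega

/-- The good event for index `i` at level `K`. -/
def goodSet {Ω : Type*} {N : ℕ} (A B : Fin N → Ω → ℝ) (K : ℕ) (i : Fin N) : Set Ω :=
  {ω | cardF B i ω < K ∧ ∀ j, cardF B j ω < K → A j ω ≤ A i ω}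

lemma measurableSet_goodSet {Ω : Type*} [MeasurableSpace Ω] {N : ℕ} {A B : Fin N → Ω → ℝ}
    (hA : ∀ i, Measurable (A i)) (hB : ∀ i, Measurable (B i)) (K : ℕ) (i : Fin N) :
    MeasurableSet (goodSet A B K i) := by
  have : goodSet A B K i =
      ((fun ω => cardF B i ω) ⁻¹' Set.Iio K) ∩
        ⋂ j, (((fun ω => cardF B j ω) ⁻¹' Set.Iio K)ᶜ ∪ {ω | A j ω ≤ A i ω}) := by
    ext ω
    simp only [goodSet, Set.mem_inter_iff, Set.mem_preimage, Set.mem_Iio, Set.mem_iInter,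
      Set.mem_union, Set.mem_compl_iff, Set.mem_setOf_eq]
    constructor
    · rintro ⟨h1, h2⟩
      refine ⟨h1, fun j => ?_⟩
      by_cases hc : cardF B j ω < K
      · exact Or.inr (h2 j hc)
      · exact Or.inl hc
    · rintro ⟨h1, h2⟩
      refine ⟨h1, fun j hj => ?_⟩
      rcases h2 j with hc | hle
      · exact absurd hj hc
      · exact hle
  rw [this]
  refine ((measurable_cardF hB i) (measurableSet_Iio)).inter
    (MeasurableSet.iInter fun j => ?_)
  exact ((measurable_cardF hB j) measurableSet_Iio).compl.union
    (measurableSet_le (hA j) (hA i))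

lemma aK_eq_sum {Ω : Type*} {N : ℕ} [NeZero N] (A B : Fin N → Ω → ℝ) {K : ℕ}
    (hK : 1 ≤ K) (ω : Ω) (hA : Function.Injective fun i => A i ω) :
    B (aK A B K ω) ω = ∑ i, Set.indicator (goodSet A B K i) (fun ω' => B i ω') ω := by
  have h := aK_spec A B hK ω
  set a := aK A B K ω with hadef
  have hga : ω ∈ goodSet A B K a := by
    refine ⟨(mem_topK_iff B K ω a).mp h.1, fun j hj => ?_⟩
    exact h.2 j ((mem_topK_iff B K ω j).mpr hj)
  have hgother : ∀ i, i ≠ a → ω ∉ goodSet A B K i := by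
    intro i hi hgi
    have h1 : A i ω ≤ A a ω := h.2 i ((mem_topK_iff B K ω i).mpr hgi.1)
    have h2 : A a ω ≤ A i ω := hgi.2 a ((mem_topK_iff B K ω a).mp h.1)
    exact hi (hA (le_antisymm h1 h2))
  rw [Finset.sum_eq_single a]
  · rw [Set.indicator_of_mem hga]
  · intro i _ hi
    rw [Set.indicator_of_notMem (hgother i hi)]
  · intro hfalse
    exact absurd (Finset.mem_univ a) hfalse

lemma integrable_aK {Ω : Type*} [MeasurableSpace Ω] (P : MeasureTheory.Measure Ω)
    {N : ℕ} [NeZero N] {A B : Fin N → Ω → ℝ}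
    (hAmeas : ∀ i, Measurable (A i)) (hBmeas : ∀ i, Measurable (B i))
    (hBint : ∀ i, MeasureTheory.Integrable (B i) P)
    {K : ℕ} (hK : 1 ≤ K)
    (hAdist : ∀ᵐ ω ∂P, Function.Injective fun i => A i ω) :
    MeasureTheory.Integrable (fun ω => B (aK A B K ω) ω) P := by
  have hgint : MeasureTheory.Integrable
      (fun ω => ∑ i, Set.indicator (goodSet A B K i) (fun ω' => B i ω') ω) P := by
    exact MeasureTheory.integrable_finset_sum _ fun i _ =>
      (hBint i).indicator (measurableSet_goodSet hAmeas hBmeas K i)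
  refine hgint.congr ?_
  filter_upwards [hAdist] with ω hA
  exact (aK_eq_sum A B hK ω hA).symm

end AuxProof

theorem stmt1 {Ω : Type*} [MeasurableSpace Ω] (P : MeasureTheory.Measure Ω)
    [MeasureTheory.IsProbabilityMeasure P]
    (N : ℕ) [NeZero N] (hN : 2 ≤ N)
    (A B C : Fin N → Ω → ℝ)
    (hAmeas : ∀ i, Measurable (A i)) (hBmeas : ∀ i, Measurable (B i))
    (hCmeas : ∀ i, Measurable (C i))
    (hAint : ∀ i, MeasureTheory.Integrable (A i) P)
    (hBint : ∀ i, MeasureTheory.Integrable (B i) P)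
    (hCint : ∀ i, MeasureTheory.Integrable (C i) P)
    (hAdist : ∀ᵐ ω ∂P, Function.Injective fun i => A i ω)
    (hBdist : ∀ᵐ ω ∂P, Function.Injective fun i => B i ω)
    :
    ∀ K, 1 ≤ K → K < N →
      ∫ ω, B (aK A B (K + 1) ω) ω ∂P ≤ ∫ ω, B (aK A B K ω) ω ∂P := by
  intro K hK hKN
  refine MeasureTheory.integral_mono_ae
    (integrable_aK P hAmeas hBmeas hBint (by omega) hAdist)
    (integrable_aK P hAmeas hBmeas hBint hK hAdist) ?_
  filter_upwards [hAdist] with ω hA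
  exact key_ineq A B hK ω hA
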